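/- arXiv:2502.09630 — 4 statements merged into one kernel-verified Lean document; each statement's English description precedes it below -/
import Mathlib

section
/- Let n ≥ 5, c ≥ 0, m ≥ 1. Let α : ℝⁿ × ℝⁿ → ℝᵐ be a symmetric bilinear map, let H = (1/n)‖Σᵢ α(eᵢ,eᵢ)‖ for the standard orthonormal basis (eᵢ), and define for 1 ≤ i < j ≤ n the sectional curvatures K(i,j) = c + ⟨α(eᵢ,eᵢ), α(eⱼ,eⱼ)⟩ - ‖α(eᵢ,eⱼ)‖². Assume K(i,j) ≥ (1/2)(c + (n/4)H²) for all i < j. Then for every integer p with 2 ≤ p ≤ n-2, the quantity Θ_p = Σ_{i=1}^p Σ_{j=p+1}^n (2‖α(eᵢ,eⱼ)‖² - ⟨α(eᵢ,eᵢ), α(eⱼ,eⱼ)⟩) satisfies Θ_p ≤ p(n-p)c. -/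
open scoped RealInnerProductSpace
open Finset

/-- Algebraic core of Proposition 2.2(i): if the sectional curvatures given by the
Gauss equation satisfy the pinching `K(i,j) ≥ (1/2)(c + (n/4)H²)`, then the
Lawson–Simons quantity satisfies `Θ_p ≤ p(n-p)c` for all `2 ≤ p ≤ n-2`. -/
theorem stmt_3 (n m : ℕ) (hn : 5 ≤ n) (hm : 1 ≤ m) (c : ℝ) (hc : 0 ≤ c)
    (α : Fin n → Fin n → EuclideanSpace ℝ (Fin m))
    (hsymm : ∀ i j, α i j = α j i)
    (H : ℝ) (hH : H = (1 / (n : ℝ)) * ‖∑ i, α i i‖)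
    (K : Fin n → Fin n → ℝ)
    (hK : ∀ i j, K i j = c + ⟪α i i, α j j⟫ - ‖α i j‖^2)
    (hpinch : ∀ i j : Fin n, i < j → (1/2) * (c + ((n : ℝ)/4) * H^2) ≤ K i j)
    (p : ℕ) (hp : 2 ≤ p) (hp' : p ≤ n - 2) :
    ∑ i ∈ univ.filter (fun i : Fin n => (i : ℕ) < p),
      ∑ j ∈ univ.filter (fun j : Fin n => p ≤ (j : ℕ)),
        (2 * ‖α i j‖^2 - ⟪α i i, α j j⟫)
      ≤ (p : ℝ) * ((n : ℝ) - (p : ℝ)) * c := by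
  have hpn : p < n := by omega
  set P := univ.filter (fun i : Fin n => (i : ℕ) < p) with hP
  set Q := univ.filter (fun j : Fin n => p ≤ (j : ℕ)) with hQ
  have hcardP : P.card = p := by
    have : P = Finset.Iio (⟨p, hpn⟩ : Fin n) := by ext i; simp [hP, Fin.lt_def]
    rw [this, Fin.card_Iio]
  have hcardQ : Q.card = n - p := by
    have : Q = Finset.Ici (⟨p, hpn⟩ : Fin n) := by ext i; simp [hQ, Fin.le_def]
    rw [this, Fin.card_Ici]
  -- termwise bound from the Gauss equation and the pinching hypothesis
  have hterm : ∀ i ∈ P, ∀ j ∈ Q,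
      2 * ‖α i j‖^2 - ⟪α i i, α j j⟫ ≤
        c - ((n : ℝ)/4) * H^2 + ⟪α i i, α j j⟫ := by
    intro i hi j hj
    simp only [hP, hQ, mem_filter] at hi hj
    have hij : i < j := by exact Fin.lt_def.mpr (lt_of_lt_of_le hi.2 hj.2)
    have := hpinch i j hij
    rw [hK i j] at this
    nlinarith [this]
  have hsum := Finset.sum_le_sum (fun i hi => Finset.sum_le_sum (hterm i hi))
  -- evaluate the bounding sum
  set A := ∑ i ∈ P, α i i with hA
  set B := ∑ j ∈ Q, α j j with hB
  have hinner : ∑ i ∈ P, ∑ j ∈ Q, ⟪α i i, α j j⟫ = ⟪A, B⟫ := by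
    rw [hA, hB, sum_inner]
    exact Finset.sum_congr rfl fun i _ => by rw [inner_sum]
  have hRHS : ∑ i ∈ P, ∑ j ∈ Q, (c - ((n : ℝ)/4) * H^2 + ⟪α i i, α j j⟫)
      = (p : ℝ) * ((n : ℝ) - p) * (c - ((n : ℝ)/4) * H^2) + ⟪A, B⟫ := by
    simp only [Finset.sum_add_distrib, Finset.sum_const, hcardP, hcardQ, nsmul_eq_mul,
      hinner]
    have : ((n - p : ℕ) : ℝ) = (n : ℝ) - p := by
      rw [Nat.cast_sub hpn.le]
    rw [this]; ring
  -- A + B is the full trace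
  have hS : A + B = ∑ i, α i i := by
    rw [hA, hB, ← Finset.sum_union]
    · congr 1
      ext i; simp [hP, hQ]; omega
    · rw [Finset.disjoint_filter]; intro i _ h; omega
  have hnpos : (0:ℝ) < n := by positivity
  have hnormS : ‖A + B‖ = (n : ℝ) * H := by
    rw [hS, hH]; field_simp
  have hAB : ⟪A, B⟫ ≤ ((n:ℝ) * H)^2 / 4 := by
    have h1 := norm_add_sq_real A B
    have h2 := norm_sub_sq_real A B
    have h3 : (0:ℝ) ≤ ‖A - B‖^2 := sq_nonneg _
    rw [hnormS] at h1
    nlinarith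
  -- p(n-p) ≥ n
  have hpn2 : (n : ℝ) ≤ (p:ℝ) * ((n:ℝ) - p) := by
    have h1 : (2:ℝ) ≤ p := by exact_mod_cast hp
    have h2 : (p:ℝ) + 2 ≤ n := by exact_mod_cast (by omega : p + 2 ≤ n)
    have h5 : (5:ℝ) ≤ n := by exact_mod_cast hn
    nlinarith
  have hH2 : (0:ℝ) ≤ H^2 := sq_nonneg _
  calc ∑ i ∈ P, ∑ j ∈ Q, (2 * ‖α i j‖^2 - ⟪α i i, α j j⟫)
      ≤ (p : ℝ) * ((n : ℝ) - p) * (c - ((n : ℝ)/4) * H^2) + ⟪A, B⟫ := by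
        rw [← hRHS]; exact hsum
    _ ≤ (p : ℝ) * ((n : ℝ) - p) * (c - ((n : ℝ)/4) * H^2) + ((n:ℝ) * H)^2 / 4 := by
        linarith
    _ ≤ (p : ℝ) * ((n : ℝ) - p) * c := by nlinarith
end

section
/- Under the hypotheses of the previous statement (n ≥ 5, sectional curvatures K(i,j) ≥ (1/2)(c + (n/4)H²)), if moreover equality Θ_p = p(n-p)c holds for some p with 2 ≤ p ≤ n-2, then H = 0 and K(i,j) = c/2 for all 1 ≤ i ≤ p and p+1 ≤ j ≤ n. -/
/-!
With `A = ∑_{i ≤ p} α(eᵢ,eᵢ)` and `B = ∑_{j > p} α(eⱼ,eⱼ)`, the equality `Θ_p = p(n-p)c` says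
exactly that `∑_{i ≤ p < j} (2K(i,j) - c) = ⟨A, B⟩`. The pinching bounds every summand below by
`(n/4)H²`, while `⟨A, B⟩ ≤ ‖A + B‖²/4 = n²H²/4`; since `p(n-p) > n` this forces `H = 0`. Then
`B = -A`, so `⟨A, B⟩ ≤ 0`, and the summands, now nonnegative, must all vanish.
-/

open scoped RealInnerProductSpace
open Finset

section InnerProduct

variable {E : Type*} [NormedAddCommGroup E] [InnerProductSpace ℝ E]

theorem real_inner_le_norm_add_sq_div_four (x y : E) : ⟪x, y⟫ ≤ ‖x + y‖ ^ 2 / 4 := by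
  rw [norm_add_sq_real]
  nlinarith [norm_sub_sq_real x y, sq_nonneg ‖x - y‖]

theorem real_inner_nonpos_of_add_eq_zero {x y : E} (h : x + y = 0) : ⟪x, y⟫ ≤ 0 := by
  rw [eq_neg_of_add_eq_zero_right h, inner_neg_right, real_inner_self_eq_norm_sq]
  exact neg_nonpos.2 (sq_nonneg _)

theorem sum_sum_two_mul_curvature_sub_eq {ι : Type*} (α : ι → ι → E) (c : ℝ)
    (I J : Finset ι) :
    ∑ i ∈ I, ∑ j ∈ J, (2 * (c + ⟪α i i, α j j⟫ - ‖α i j‖ ^ 2) - c) =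
      #I * #J * c + ⟪∑ i ∈ I, α i i, ∑ j ∈ J, α j j⟫ -
        ∑ i ∈ I, ∑ j ∈ J, (2 * ‖α i j‖ ^ 2 - ⟪α i i, α j j⟫) := by
  have hsummand : ∀ i j, 2 * (c + ⟪α i i, α j j⟫ - ‖α i j‖ ^ 2) - c =
      c + ⟪α i i, α j j⟫ - (2 * ‖α i j‖ ^ 2 - ⟪α i i, α j j⟫) := fun _ _ => by ring
  simp only [hsummand, sum_sub_distrib, sum_add_distrib, sum_const, nsmul_eq_mul, sum_inner]
  simp only [inner_sum]
  ring

theorem eq_zero_of_mul_sq_le_inner {A B : E} {N k H : ℝ} (hN : 0 < N) (hk : N < k)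
    (hnorm : ‖A + B‖ = N * H) (hAB : k * (N / 4 * H ^ 2) ≤ ⟪A, B⟫) : H = 0 := by
  have hbound := hAB.trans (real_inner_le_norm_add_sq_div_four A B)
  rw [hnorm] at hbound
  have hH2 : H ^ 2 ≤ 0 := by nlinarith [mul_pos hN (sub_pos.2 hk)]
  exact pow_eq_zero_iff two_ne_zero |>.1 (le_antisymm hH2 (sq_nonneg H))

end InnerProduct

section DoubleSums

variable {ι κ : Type*} {I : Finset ι} {J : Finset κ} {f : ι → κ → ℝ}

theorem Finset.card_mul_card_mul_le_sum_sum {a : ℝ} (h : ∀ i ∈ I, ∀ j ∈ J, a ≤ f i j) :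
    #I * #J * a ≤ ∑ i ∈ I, ∑ j ∈ J, f i j := by
  rw [← sum_product' (f := f), ← Nat.cast_mul, ← card_product, ← nsmul_eq_mul]
  exact card_nsmul_le_sum _ _ _ fun x hx => h _ (mem_product.1 hx).1 _ (mem_product.1 hx).2

theorem Finset.eq_zero_of_sum_sum_nonpos (h : ∀ i ∈ I, ∀ j ∈ J, 0 ≤ f i j)
    (hsum : ∑ i ∈ I, ∑ j ∈ J, f i j ≤ 0) {i : ι} {j : κ} (hi : i ∈ I) (hj : j ∈ J) :
    f i j = 0 := by
  have hprod : ∀ x ∈ I ×ˢ J, 0 ≤ f x.1 x.2 := fun x hx =>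
    h _ (mem_product.1 hx).1 _ (mem_product.1 hx).2
  rw [← sum_product' (f := f)] at hsum
  exact (sum_eq_zero_iff_of_nonneg hprod).1 (hsum.antisymm (sum_nonneg hprod)) (i, j)
    (mem_product.2 ⟨hi, hj⟩)

end DoubleSums

theorem lt_mul_sub_of_two_le {n p : ℝ} (hp : 2 ≤ p) (hpn : p + 2 ≤ n) (hn : 4 < n) :
    n < p * (n - p) := by
  nlinarith [mul_nonneg (sub_nonneg.2 hp) (sub_nonneg.2 hpn)]

theorem Fin.card_filter_le_val {n p : ℕ} : #{j : Fin n | p ≤ (j : ℕ)} = n - p := by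
  have := card_filter_add_card_filter_not (s := univ) fun i : Fin n => (i : ℕ) < p
  simp only [not_lt, Fin.card_filter_val_lt, card_univ, Fintype.card_fin] at this
  omega

theorem Fin.sum_filter_val_lt_add_sum_filter_le_val {M : Type*} [AddCommMonoid M] {n : ℕ}
    (p : ℕ) (f : Fin n → M) :
    ∑ i ∈ univ.filter (fun i : Fin n => (i : ℕ) < p), f i +
      ∑ j ∈ univ.filter (fun j : Fin n => p ≤ (j : ℕ)), f j = ∑ i, f i := by
  simpa only [not_lt] using sum_filter_add_sum_filter_not univ (fun i : Fin n => (i : ℕ) < p) f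

theorem stmt_4_general (n m : ℕ) (hn : 5 ≤ n) (c : ℝ)
    (α : Fin n → Fin n → EuclideanSpace ℝ (Fin m))
    (H : ℝ) (hH : H = (1 / (n : ℝ)) * ‖∑ i, α i i‖)
    (K : Fin n → Fin n → ℝ)
    (hK : ∀ i j, K i j = c + ⟪α i i, α j j⟫ - ‖α i j‖^2)
    (hpinch : ∀ i j : Fin n, i < j → (1/2) * (c + ((n : ℝ)/4) * H^2) ≤ K i j)
    (p : ℕ) (hp : 2 ≤ p) (hp' : p ≤ n - 2)
    (heq : ∑ i ∈ univ.filter (fun i : Fin n => (i : ℕ) < p),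
      ∑ j ∈ univ.filter (fun j : Fin n => p ≤ (j : ℕ)),
        (2 * ‖α i j‖^2 - ⟪α i i, α j j⟫)
      = (p : ℝ) * ((n : ℝ) - (p : ℝ)) * c) :
    H = 0 ∧ ∀ i j : Fin n, (i : ℕ) < p → p ≤ (j : ℕ) → K i j = c / 2 := by
  set I := univ.filter (fun i : Fin n => (i : ℕ) < p)
  set J := univ.filter (fun j : Fin n => p ≤ (j : ℕ))
  have hI_lt_J : ∀ i ∈ I, ∀ j ∈ J, i < j := fun i hi j hj =>
    Fin.lt_def.2 ((mem_filter.1 hi).2.trans_le (mem_filter.1 hj).2)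
  have hcard : (#I : ℝ) * #J = p * (n - p) := by
    rw [Fin.card_filter_val_lt, Fin.card_filter_le_val, min_eq_right (by omega),
      Nat.cast_sub (by omega)]
  have hnorm : ‖∑ i ∈ I, α i i + ∑ j ∈ J, α j j‖ = n * H := by
    rw [Fin.sum_filter_val_lt_add_sum_filter_le_val, hH]
    field_simp
  have hblock : ∑ i ∈ I, ∑ j ∈ J, (2 * K i j - c) = ⟪∑ i ∈ I, α i i, ∑ j ∈ J, α j j⟫ := by
    simp only [hK, sum_sum_two_mul_curvature_sub_eq, heq, hcard]
    ring
  have hn_lt : (n : ℝ) < #I * #J := by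
    rw [hcard]
    exact lt_mul_sub_of_two_le (by exact_mod_cast hp) (by exact_mod_cast (by omega : p + 2 ≤ n))
      (by exact_mod_cast (by omega : 4 < n))
  have hH0 : H = 0 := eq_zero_of_mul_sq_le_inner (Nat.cast_pos.2 (by omega)) hn_lt hnorm <|
    hblock ▸ card_mul_card_mul_le_sum_sum fun i hi j hj => by
      linarith [hpinch i j (hI_lt_J i hi j hj)]
  have hnonneg : ∀ i ∈ I, ∀ j ∈ J, 0 ≤ 2 * K i j - c := fun i hi j hj => by
    have h := hpinch i j (hI_lt_J i hi j hj)
    rw [hH0] at h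
    linarith
  have hnonpos : ∑ i ∈ I, ∑ j ∈ J, (2 * K i j - c) ≤ 0 :=
    hblock ▸ real_inner_nonpos_of_add_eq_zero (norm_eq_zero.1 (by rw [hnorm, hH0, mul_zero]))
  refine ⟨hH0, fun i j hi hj => ?_⟩
  linarith [eq_zero_of_sum_sum_nonpos hnonneg hnonpos (mem_filter.2 ⟨mem_univ i, hi⟩)
    (mem_filter.2 ⟨mem_univ j, hj⟩)]

/-- Algebraic core of Proposition 2.2(ii): under the pinching
`K(i,j) ≥ (1/2)(c + (n/4)H²)`, if equality `Θ_p = p(n-p)c` holds for some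
`2 ≤ p ≤ n-2`, then `H = 0` and `K(i,j) = c/2` for all `i ≤ p < j`. -/
theorem stmt_4 (n m : ℕ) (hn : 5 ≤ n) (hm : 1 ≤ m) (c : ℝ) (hc : 0 ≤ c)
    (α : Fin n → Fin n → EuclideanSpace ℝ (Fin m))
    (hsymm : ∀ i j, α i j = α j i)
    (H : ℝ) (hH : H = (1 / (n : ℝ)) * ‖∑ i, α i i‖)
    (K : Fin n → Fin n → ℝ)
    (hK : ∀ i j, K i j = c + ⟪α i i, α j j⟫ - ‖α i j‖^2)
    (hpinch : ∀ i j : Fin n, i < j → (1/2) * (c + ((n : ℝ)/4) * H^2) ≤ K i j)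
    (p : ℕ) (hp : 2 ≤ p) (hp' : p ≤ n - 2)
    (heq : ∑ i ∈ univ.filter (fun i : Fin n => (i : ℕ) < p),
      ∑ j ∈ univ.filter (fun j : Fin n => p ≤ (j : ℕ)),
        (2 * ‖α i j‖^2 - ⟪α i i, α j j⟫)
      = (p : ℝ) * ((n : ℝ) - (p : ℝ)) * c) :
    H = 0 ∧ ∀ i j : Fin n, (i : ℕ) < p → p ≤ (j : ℕ) → K i j = c / 2 :=
  stmt_4_general n m hn c α H hH K hK hpinch p hp hp' heq
end

section
/- Let R be an algebraic curvature tensor on ℝ⁴ and let F : U → ℝ, F(x,y) = Σ x_i x_j y_k y_l R_{iklj} - K(‖x‖²‖y‖² - ⟨x,y⟩²), where U = {(x,y) : x∧y ≠ 0} and K is a constant. If F ≥ 0 on U and F(e_i, e_j) = 0 for some fixed i ≠ j from the standard basis, then R_{kjji} = 0 and R_{kiij} = 0 for all k ∉ {i,j}. -/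
open Finset

private theorem aux_lin (a b : ℝ) (h : ∀ t : ℝ, 0 ≤ a * t + b * t^2) : a = 0 := by
  have hc : (0:ℝ) < 1 + |b| := by positivity
  have ht := h (-a / (1 + |b|))
  have key : 0 ≤ (a * (-a/(1+|b|)) + b * (-a/(1+|b|))^2) * (1+|b|)^2 :=
    mul_nonneg ht (sq_nonneg _)
  have heq : (a * (-a/(1+|b|)) + b * (-a/(1+|b|))^2) * (1+|b|)^2
      = -a^2*(1+|b|) + b*a^2 := by field_simp
  rw [heq] at key
  have h2 : b ≤ |b| := le_abs_self b
  have hsq : a^2 = 0 := by nlinarith [sq_nonneg a]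
  exact pow_eq_zero_iff (by norm_num) |>.mp hsq

private theorem aux_li (i j k : Fin 4) (t : ℝ) (hij : i ≠ j) (hki : k ≠ i)
    (hkj : k ≠ j) :
    LinearIndependent ℝ
      ![(Pi.single i 1 : Fin 4 → ℝ) + t • (Pi.single k 1 : Fin 4 → ℝ),
        (Pi.single j 1 : Fin 4 → ℝ)] := by
  rw [LinearIndependent.pair_iff]
  intro s r h
  have hi := congrFun h i
  have hj := congrFun h j
  simp [Pi.single_apply, hij, hij.symm, hki, hki.symm, hkj, hkj.symm] at hi hj
  exact ⟨hi, hj⟩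

private theorem aux_li' (i j k : Fin 4) (t : ℝ) (hij : i ≠ j) (hki : k ≠ i)
    (hkj : k ≠ j) :
    LinearIndependent ℝ
      ![(Pi.single i 1 : Fin 4 → ℝ),
        (Pi.single j 1 : Fin 4 → ℝ) + t • (Pi.single k 1 : Fin 4 → ℝ)] := by
  rw [LinearIndependent.pair_iff]
  intro s r h
  have hi := congrFun h i
  have hj := congrFun h j
  simp [Pi.single_apply, hij, hij.symm, hki, hki.symm, hkj, hkj.symm] at hi hj
  exact ⟨hi, hj⟩

/-- First-derivative-test step in the proof of Lemma 4.1: if the function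
`F(x,y) = Σ xᵢxⱼyₖyₗ R_{iklj} - K(‖x‖²‖y‖² - ⟨x,y⟩²)` is nonnegative on pairs
of linearly independent vectors and vanishes at `(e_i, e_j)` for standard basis
vectors with `i ≠ j`, then `R_{kjji} = 0` and `R_{kiij} = 0` for all `k ∉ {i,j}`. -/
theorem stmt_6 (R : Fin 4 → Fin 4 → Fin 4 → Fin 4 → ℝ)
    (hA1 : ∀ i j k l, R i j k l = - R j i k l)
    (hA2 : ∀ i j k l, R i j k l = - R i j l k)
    (hP : ∀ i j k l, R i j k l = R k l i j)
    (hBianchi : ∀ i j k l, R i j k l + R j k i l + R k i j l = 0)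
    (K : ℝ) (F : (Fin 4 → ℝ) → (Fin 4 → ℝ) → ℝ)
    (hF : ∀ x y : Fin 4 → ℝ, F x y =
      (∑ i, ∑ j, ∑ k, ∑ l, x i * x j * y k * y l * R i k l j)
        - K * ((∑ i, (x i)^2) * (∑ i, (y i)^2) - (∑ i, x i * y i)^2))
    (hnn : ∀ x y : Fin 4 → ℝ, LinearIndependent ℝ ![x, y] → 0 ≤ F x y)
    (i j : Fin 4) (hij : i ≠ j)
    (hzero : F (Pi.single i 1) (Pi.single j 1) = 0) :
    ∀ k : Fin 4, k ≠ i → k ≠ j → R k j j i = 0 ∧ R k i i j = 0 := by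
  intro k hki hkj
  -- value at the base point
  have hbase : R i j j i - K = 0 := by
    rw [hF] at hzero
    rw [← hzero]
    simp only [Pi.single_apply, mul_ite, ite_mul, mul_zero, zero_mul, mul_one, one_mul,
      Finset.sum_ite_eq, Finset.sum_ite_eq', Finset.mem_univ, if_true]
    simp [hij, hij.symm]
  -- symmetry identities
  have e1 : R i j j k = R k j j i := by
    linarith [hP i j j k, hA1 j k i j, hA2 k j i j]
  have e2 : R i k j i = R i j k i := by
    linarith [hP i k j i, hA1 j i i k, hA2 i j i k]
  have e3 : R k i i j = R i j k i := hP k i i j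
  -- first direction: perturb x
  have key1 : ∀ t : ℝ,
      F ((Pi.single i 1 : Fin 4 → ℝ) + t • (Pi.single k 1 : Fin 4 → ℝ))
        (Pi.single j 1)
      = (R i j j k + R k j j i) * t + (R k j j k - K) * t^2 := by
    intro t
    rw [hF]
    simp only [Pi.add_apply, Pi.smul_apply, Pi.single_apply, smul_eq_mul,
      mul_ite, ite_mul, mul_zero, zero_mul, mul_one, one_mul,
      Finset.sum_ite_eq, Finset.sum_ite_eq', Finset.mem_univ, if_true,
      add_mul, mul_add, Finset.sum_add_distrib, add_pow_two]
    simp [hij, hij.symm, hki, hki.symm, hkj, hkj.symm, Finset.sum_add_distrib,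
      mul_pow, Finset.mul_sum]
    nlinarith [hbase]
  have h1 : R i j j k + R k j j i = 0 := by
    apply aux_lin _ (R k j j k - K)
    intro t
    rw [← key1 t]
    exact hnn _ _ (aux_li i j k t hij hki hkj)
  -- second direction: perturb y
  have key2 : ∀ t : ℝ,
      F (Pi.single i 1)
        ((Pi.single j 1 : Fin 4 → ℝ) + t • (Pi.single k 1 : Fin 4 → ℝ))
      = (R i j k i + R i k j i) * t + (R i k k i - K) * t^2 := by
    intro t
    rw [hF]
    simp only [Pi.add_apply, Pi.smul_apply, Pi.single_apply, smul_eq_mul,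
      mul_ite, ite_mul, mul_zero, zero_mul, mul_one, one_mul,
      Finset.sum_ite_eq, Finset.sum_ite_eq', Finset.mem_univ, if_true,
      add_mul, mul_add, Finset.sum_add_distrib, add_pow_two]
    simp [hij, hij.symm, hki, hki.symm, hkj, hkj.symm, Finset.sum_add_distrib,
      mul_pow, Finset.mul_sum]
    nlinarith [hbase]
  have h2 : R i j k i + R i k j i = 0 := by
    apply aux_lin _ (R i k k i - K)
    intro t
    rw [← key2 t]
    exact hnn _ _ (aux_li' i j k t hij hki hkj)
  constructor
  · linarith [h1, e1]
  · linarith [h2, e2, e3]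
end

section
/- Let n ≥ 5, c ≥ 0, and 0 < λ₁ ≤ λ₂ ≤ ⋯ ≤ λₙ be real numbers with λₙ² ≤ (4/n)(c + 2λ₁²). Set H = (1/n) Σᵢ λᵢ. Then c + λ₁² ≥ (1/2)(c + (n/4)H²). -/
open Finset

/-- Algebraic content of Proposition 4.3 for `n ≥ 5`: if
`0 < λ₁ ≤ ⋯ ≤ λₙ`, `λₙ² ≤ (4/n)(c + 2λ₁²)` and `H = (1/n)Σλᵢ`, then
`c + λ₁² ≥ (1/2)(c + (n/4)H²)`. -/
theorem stmt_11 (n : ℕ) (hn : 5 ≤ n) (c : ℝ) (hc : 0 ≤ c)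
    (lam : Fin n → ℝ) (hpos : ∀ i, 0 < lam i) (hmono : Monotone lam)
    (hpinch : (lam ⟨n - 1, by omega⟩)^2 ≤ (4 / (n : ℝ)) * (c + 2 * (lam ⟨0, by omega⟩)^2))
    (H : ℝ) (hH : H = (1 / (n : ℝ)) * ∑ i, lam i) :
    c + (lam ⟨0, by omega⟩)^2 ≥ (1/2) * (c + ((n : ℝ)/4) * H^2) := by
  have hn0 : (0:ℝ) < n := by positivity
  set top : Fin n := ⟨n - 1, by omega⟩
  have hsum : ∑ i, lam i ≤ n * lam top := by
    calc ∑ i, lam i ≤ ∑ _i : Fin n, lam top :=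
          Finset.sum_le_sum (fun i _ => hmono (by
            show i.1 ≤ n - 1
            omega))
      _ = n * lam top := by simp [mul_comm]
  have hHle : H ≤ lam top := by
    rw [hH]
    rw [div_mul_eq_mul_div, one_mul, div_le_iff₀ hn0] at *
    linarith [hsum]
  have hH0 : 0 ≤ H := by
    rw [hH]
    have : 0 ≤ ∑ i, lam i := Finset.sum_nonneg fun i _ => (hpos i).le
    positivity
  have hH2 : H^2 ≤ (lam top)^2 := by
    apply pow_le_pow_left₀ hH0 hHle
  have key : (n:ℝ)/4 * H^2 ≤ c + 2 * (lam ⟨0, by omega⟩)^2 := by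
    have h2 : (n:ℝ)/4 * H^2 ≤ (n:ℝ)/4 * (lam top)^2 := by
      apply mul_le_mul_of_nonneg_left hH2 (by positivity)
    have h3 : (n:ℝ)/4 * (lam top)^2 ≤ (n:ℝ)/4 * ((4/(n:ℝ)) * (c + 2 * (lam ⟨0, by omega⟩)^2)) :=
      mul_le_mul_of_nonneg_left hpinch (by positivity)
    have h4 : (n:ℝ)/4 * ((4/(n:ℝ)) * (c + 2 * (lam ⟨0, by omega⟩)^2)) = c + 2 * (lam ⟨0, by omega⟩)^2 := by
      field_simp
    linarith
  linarith
end
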